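/- arXiv:2602.14076 — 9 statements merged into one kernel-verified Lean document; each statement's English description precedes it below -/
import Mathlib

section
/- Fix γ ∈ [0,1] and ξ ≥ 0, and consider the MCV mechanism M^γ under deterministic verification. Then: (i) for every t ∈ [0,1], the expected grade of a truthful agent of type t equals max(t, γ); (ii) for every t, t̂ ∈ [0,1] with t̂ ≠ t, the expected grade of a type-t agent reporting t̂ equals γ. Consequently truth-telling is a weakly dominant strategy (HR1), truth-tellers are never punished (HR2), and all realized grades are at least −ξ (HR3), i.e., M^γ is valid. -/
/-- Audit probability of the MCV mechanism `M^γ` with penalty bound `ξ`. -/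
noncomputable def mcvV (γ ξ r : ℝ) : ℝ := if γ < r then (r - γ) / (r + ξ) else 0

/-- Grade of an unverified agent in the MCV mechanism. -/
noncomputable def mcvBot (γ r : ℝ) : ℝ := if γ < r then r else γ

/-- Grade of a verified agent (report `r`, verified type `s`) in the MCV mechanism. -/
noncomputable def mcvVer (ξ r s : ℝ) : ℝ := if s = r then r else -ξ

/-- Expected grade of a type-`t` agent reporting `r` under deterministic verification. -/
noncomputable def mcvBar (γ ξ t r : ℝ) : ℝ :=
  mcvV γ ξ r * mcvVer ξ r t + (1 - mcvV γ ξ r) * mcvBot γ r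

section MCV

variable {γ ξ : ℝ}

lemma le_mcvBot (γ r : ℝ) : r ≤ mcvBot γ r := by
  unfold mcvBot
  split_ifs with h
  · exact le_rfl
  · exact not_lt.1 h

lemma mcvVer_self (ξ r : ℝ) : mcvVer ξ r r = r := if_pos rfl

lemma neg_le_mcvVer (hr : -ξ ≤ r) (s : ℝ) : -ξ ≤ mcvVer ξ r s := by
  unfold mcvVer
  split_ifs
  exacts [hr, le_rfl]

lemma mcvBar_self (γ ξ t : ℝ) : mcvBar γ ξ t t = max t γ := by
  by_cases h : γ < t
  · simp only [mcvBar, mcvVer_self, mcvBot, if_pos h, max_eq_left h.le]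
    ring
  · simp [mcvBar, mcvV, mcvBot, h, max_eq_right (not_lt.1 h)]

/- The audit probability is tuned so that `V(r) * (r + ξ) = r - γ`: a liar reporting `r > γ`
gains `r - γ` when unaudited and loses `r + ξ` when audited, which nets out to `γ`. -/
lemma mcvBar_of_ne (hγξ : 0 ≤ γ + ξ) {t r : ℝ} (hne : t ≠ r) : mcvBar γ ξ t r = γ := by
  rw [mcvBar, mcvVer, if_neg hne]
  by_cases h : γ < r
  · have hpos : r + ξ ≠ 0 := by linarith
    rw [mcvV, mcvBot, if_pos h, if_pos h]
    field_simp
    ring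
  · simp [mcvV, mcvBot, h]

lemma mcvBar_le_mcvBar_self (hγξ : 0 ≤ γ + ξ) (t r : ℝ) : mcvBar γ ξ t r ≤ mcvBar γ ξ t t := by
  rcases eq_or_ne t r with rfl | hne
  · exact le_rfl
  · rw [mcvBar_of_ne hγξ hne, mcvBar_self]
    exact le_max_right t γ

end MCV

theorem mcv_valid (γ ξ : ℝ) (hγ : γ ∈ Set.Icc (0 : ℝ) 1) (hξ : 0 ≤ ξ) :
    -- (i) truthful expected grade
    (∀ t ∈ Set.Icc (0 : ℝ) 1, mcvBar γ ξ t t = max t γ) ∧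
    -- (ii) expected grade of any lie equals γ
    (∀ t ∈ Set.Icc (0 : ℝ) 1, ∀ r ∈ Set.Icc (0 : ℝ) 1, r ≠ t → mcvBar γ ξ t r = γ) ∧
    -- HR1: truth-telling is weakly dominant
    (∀ t ∈ Set.Icc (0 : ℝ) 1, ∀ r ∈ Set.Icc (0 : ℝ) 1, mcvBar γ ξ t r ≤ mcvBar γ ξ t t) ∧
    -- HR2: truth-tellers are never punished
    (∀ t ∈ Set.Icc (0 : ℝ) 1, t ≤ mcvBot γ t ∧ t ≤ mcvVer ξ t t) ∧
    -- HR3: all realized grades are at least -ξ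
    (∀ r ∈ Set.Icc (0 : ℝ) 1, -ξ ≤ mcvBot γ r ∧ ∀ s ∈ Set.Icc (0 : ℝ) 1, -ξ ≤ mcvVer ξ r s) := by
  have hγξ : 0 ≤ γ + ξ := add_nonneg hγ.1 hξ
  refine ⟨fun t _ => mcvBar_self γ ξ t,
    fun t _ r _ hne => mcvBar_of_ne hγξ hne.symm,
    fun t _ r _ => mcvBar_le_mcvBar_self hγξ t r,
    fun t _ => ⟨le_mcvBot γ t, (mcvVer_self ξ t).ge⟩,
    fun r hr => ?_⟩
  have hξr : -ξ ≤ r := by linarith [hr.1]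
  exact ⟨hξr.trans (le_mcvBot γ r), fun s _ => neg_le_mcvVer hξr s⟩
end

section
/- (Optimality of the MCV class.) Let ξ ≥ 0 and let (V, g⊥, gver) be any mechanism satisfying HR1, HR2 and HR3. Then there exists γ ∈ [0,1] such that: (i) for every t ∈ [0,1], the truthful expected grade satisfies ḡ_t(t) ≥ max(t, γ); and (ii) for every t̂ ∈ [0,1], V(t̂)·(t̂ + ξ) ≥ t̂ − γ. Consequently, for every Borel probability measure p on [0,1], the expected bias ∫(ḡ_t(t) − t) dp(t) is at least ∫ max(γ − t, 0) dp(t), and the expected verification ∫ V(t) dp(t) is at least ∫ max(t − γ, 0)/(t + ξ) dp(t) (interpreting the integrand as 0 when t ≤ γ); i.e., the mechanism is weakly dominated by the MCV mechanism M^γ. -/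
/-!
Deviating from type `t` to a report `r` earns at least `V r * (-ξ) + (1 - V r) * r`, since a
verified grade is at least `-ξ` (HR3) and an unverified one at least `r` (HR2). By truthfulness
(HR1) every truthful grade dominates this *deviation floor* `r - V r * (r + ξ)` for every `r`, and
by HR2 it also dominates `t`. Taking `γ` to be the least nonnegative upper bound of the deviation
floor over `[0,1]` gives (i) and (ii) at once, and the bounds in expectation follow by integrating
the pointwise ones.
-/

open MeasureTheory Set

lemma mul_add_one_sub_mul_le_mul_add_one_sub_mul {α : Type*} [Ring α] [PartialOrder α]
    [IsOrderedRing α] {v a a' b b' : α} (hv : v ∈ Icc 0 1) (ha : a ≤ a') (hb : b ≤ b') :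
    v * a + (1 - v) * b ≤ v * a' + (1 - v) * b' := by
  have hv₀ : 0 ≤ v := hv.1
  have hv₁ : 0 ≤ 1 - v := sub_nonneg.2 hv.2
  gcongr

lemma exists_isLeast_nonneg_upper_bound {ι : Type*} {s : Set ι} {f : ι → ℝ}
    (hf : BddAbove (f '' s)) : ∃ γ, IsLeast {c | 0 ≤ c ∧ ∀ x ∈ s, f x ≤ c} γ := by
  obtain ⟨γ, hγ⟩ := Real.exists_isLUB (insert_nonempty 0 _) (hf.insert 0)
  refine ⟨γ, ?_⟩
  unfold IsLUB at hγ
  convert hγ using 2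
  ext c
  simp [upperBounds_insert, mem_upperBounds]

lemma integral_max_sub_le_integral_sub {α : Type*} [MeasurableSpace α] {μ : Measure α}
    {u G : α → ℝ} {γ : ℝ} (hint : Integrable (fun x => G x - u x) μ)
    (hG : ∀ᵐ x ∂μ, max (u x) γ ≤ G x) :
    ∫ x, max (γ - u x) 0 ∂μ ≤ ∫ x, (G x - u x) ∂μ := by
  refine integral_mono_of_nonneg (.of_forall fun x => le_max_right _ _) hint ?_
  filter_upwards [hG] with x hx
  exact max_le (by linarith [le_max_right (u x) γ]) (by linarith [le_max_left (u x) γ])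

lemma max_div_le_of_le_mul {a b v : ℝ} (hv : 0 ≤ v) (h : a ≤ v * b) : max a 0 / b ≤ v := by
  rcases le_or_gt b 0 with hb | hb
  · exact (div_nonpos_of_nonneg_of_nonpos (le_max_right a 0) hb).trans hv
  · exact (div_le_iff₀ hb).2 (max_le h (by positivity))

lemma integral_max_div_le_integral {α : Type*} [MeasurableSpace α] {μ : Measure α}
    {a b v : α → ℝ} (hint : Integrable v μ) (hb : ∀ᵐ x ∂μ, 0 ≤ b x) (hv : ∀ᵐ x ∂μ, 0 ≤ v x)
    (h : ∀ᵐ x ∂μ, a x ≤ v x * b x) :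
    ∫ x, max (a x) 0 / b x ∂μ ≤ ∫ x, v x ∂μ := by
  refine integral_mono_of_nonneg ?_ hint ?_
  · filter_upwards [hb] with x hx using div_nonneg (le_max_right _ _) hx
  · filter_upwards [hv, h] with x hvx hx using max_div_le_of_le_mul hvx hx

lemma integrable_id_of_ae_mem_Icc {p : Measure ℝ} [IsFiniteMeasure p]
    (hp : ∀ᵐ t ∂p, t ∈ Icc (0 : ℝ) 1) : Integrable (fun t => t) p :=
  .of_bound measurable_id.aestronglyMeasurable 1 <| by
    filter_upwards [hp] with t ht
    rw [Real.norm_eq_abs, abs_of_nonneg ht.1]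
    exact ht.2

/-- Optimality of the MCV class: any valid mechanism is weakly dominated by some
MCV mechanism `M^γ`, both pointwise (truthful grades and audit probabilities) and
in expectation over any type distribution `p` on `[0,1]`. -/
theorem mcv_class_optimal (ξ : ℝ) (hξ : 0 ≤ ξ)
    (V gbot : ℝ → ℝ) (gver : ℝ → ℝ → ℝ)
    (hV : ∀ r ∈ Set.Icc (0 : ℝ) 1, V r ∈ Set.Icc (0 : ℝ) 1)
    (gbar : ℝ → ℝ → ℝ)
    (hgbar : ∀ t r, gbar t r = V r * gver r t + (1 - V r) * gbot r)
    (HR1 : ∀ t ∈ Set.Icc (0 : ℝ) 1, ∀ r ∈ Set.Icc (0 : ℝ) 1, gbar t r ≤ gbar t t)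
    (HR2 : ∀ t ∈ Set.Icc (0 : ℝ) 1, t ≤ gbot t ∧ t ≤ gver t t)
    (HR3 : ∀ r ∈ Set.Icc (0 : ℝ) 1, -ξ ≤ gbot r ∧ ∀ s ∈ Set.Icc (0 : ℝ) 1, -ξ ≤ gver r s) :
    ∃ γ ∈ Set.Icc (0 : ℝ) 1,
      -- (i) truthful expected grades are at least those of M^γ
      (∀ t ∈ Set.Icc (0 : ℝ) 1, max t γ ≤ gbar t t) ∧
      -- (ii) audit probabilities are at least those of M^γ
      (∀ r ∈ Set.Icc (0 : ℝ) 1, r - γ ≤ V r * (r + ξ)) ∧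
      -- consequently, for any type distribution p on [0,1]:
      (∀ p : Measure ℝ, IsProbabilityMeasure p → p (Set.Icc (0 : ℝ) 1) = 1 →
        (Integrable (fun t => gbar t t) p →
          ∫ t, max (γ - t) 0 ∂p ≤ ∫ t, (gbar t t - t) ∂p) ∧
        (Integrable V p →
          ∫ t, max (t - γ) 0 / (t + ξ) ∂p ≤ ∫ t, V t ∂p)) := by
  set deviationFloor : ℝ → ℝ := fun r => r - V r * (r + ξ)
  have floor_le_one : ∀ r ∈ Icc (0 : ℝ) 1, deviationFloor r ≤ 1 := fun r hr =>
    (sub_le_self r (mul_nonneg (hV r hr).1 (add_nonneg hr.1 hξ))).trans hr.2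
  have truthful_ge_self : ∀ t ∈ Icc (0 : ℝ) 1, t ≤ gbar t t := fun t ht => calc
      t = V t * t + (1 - V t) * t := by ring
      _ ≤ gbar t t := hgbar t t ▸ mul_add_one_sub_mul_le_mul_add_one_sub_mul (hV t ht)
            (HR2 t ht).2 (HR2 t ht).1
  have truthful_ge_floor :
      ∀ t ∈ Icc (0 : ℝ) 1, ∀ r ∈ Icc (0 : ℝ) 1, deviationFloor r ≤ gbar t t :=
    fun t ht r hr => calc
      deviationFloor r = V r * -ξ + (1 - V r) * r := by ring
      _ ≤ gbar t r := hgbar t r ▸ mul_add_one_sub_mul_le_mul_add_one_sub_mul (hV r hr)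
            ((HR3 r hr).2 t ht) (HR2 r hr).1
      _ ≤ gbar t t := HR1 t ht r hr
  obtain ⟨γ, ⟨hγ₀, hfloor_le⟩, hγ_least⟩ := exists_isLeast_nonneg_upper_bound
    (f := deviationFloor) ⟨1, forall_mem_image.2 floor_le_one⟩
  have grade_ge : ∀ t ∈ Icc (0 : ℝ) 1, max t γ ≤ gbar t t := fun t ht =>
    max_le (truthful_ge_self t ht)
      (hγ_least ⟨ht.1.trans (truthful_ge_self t ht), truthful_ge_floor t ht⟩)
  have audit_ge : ∀ r ∈ Icc (0 : ℝ) 1, r - γ ≤ V r * (r + ξ) := fun r hr =>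
    sub_le_comm.1 (hfloor_le r hr)
  refine ⟨γ, ⟨hγ₀, hγ_least ⟨zero_le_one, floor_le_one⟩⟩, grade_ge, audit_ge, ?_⟩
  intro p _ hp
  have hIcc : ∀ᵐ t ∂p, t ∈ Icc (0 : ℝ) 1 := (mem_ae_iff_prob_eq_one measurableSet_Icc).2 hp
  refine ⟨fun hint => ?_, fun hint => ?_⟩
  · exact integral_max_sub_le_integral_sub (hint.sub (integrable_id_of_ae_mem_Icc hIcc))
      (hIcc.mono grade_ge)
  · exact integral_max_div_le_integral hint (hIcc.mono fun t ht => add_nonneg ht.1 hξ)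
      (hIcc.mono fun t ht => (hV t ht).1) (hIcc.mono audit_ge)
end

section
/- Let ξ ≥ 0 and let (V, g⊥, gver) be a mechanism satisfying HR1, HR2 and HR3. Define g'ver(t̂, s) := gver(t̂, s) if s = t̂ and g'ver(t̂, s) := −ξ if s ≠ t̂. Then the mechanism (V, g⊥, g'ver) also satisfies HR1, HR2 and HR3, and it has the same truthful expected grades: for every t ∈ [0,1], V(t)·g'ver(t, t) + (1 − V(t))·g⊥(t) = V(t)·gver(t, t) + (1 − V(t))·g⊥(t). -/
/-! Replacing the verified grade of a misreport by `-ξ` can only lower it, since HR3 already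
bounds it below by `-ξ`, and it leaves the grade `gver t t` of a truthful report untouched. So
misreporting becomes no more attractive (HR1), the new grades still respect the bound `-ξ` (HR3),
and HR2 and the truthful expected grades are unchanged. -/

noncomputable def penalize (ξ : ℝ) (g : ℝ → ℝ → ℝ) (r s : ℝ) : ℝ :=
  if s = r then g r s else -ξ

section penalize

variable {ξ : ℝ} {g : ℝ → ℝ → ℝ} {r s : ℝ}

@[simp]
lemma penalize_self (ξ : ℝ) (g : ℝ → ℝ → ℝ) (r : ℝ) : penalize ξ g r r = g r r :=
  if_pos rfl

lemma penalize_le (h : -ξ ≤ g r s) : penalize ξ g r s ≤ g r s := by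
  unfold penalize
  split_ifs
  exacts [le_rfl, h]

lemma neg_le_penalize (h : -ξ ≤ g r s) : -ξ ≤ penalize ξ g r s := by
  unfold penalize
  split_ifs
  exacts [h, le_rfl]

end penalize

theorem max_penalty_preserves_validity_general (ξ : ℝ)
    (V gbot : ℝ → ℝ) (gver : ℝ → ℝ → ℝ)
    (hV : ∀ r ∈ Set.Icc (0 : ℝ) 1, V r ∈ Set.Icc (0 : ℝ) 1)
    (HR1 : ∀ t ∈ Set.Icc (0 : ℝ) 1, ∀ r ∈ Set.Icc (0 : ℝ) 1,
      V r * gver r t + (1 - V r) * gbot r ≤ V t * gver t t + (1 - V t) * gbot t)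
    (HR2 : ∀ t ∈ Set.Icc (0 : ℝ) 1, t ≤ gbot t ∧ t ≤ gver t t)
    (HR3 : ∀ r ∈ Set.Icc (0 : ℝ) 1, -ξ ≤ gbot r ∧ ∀ s ∈ Set.Icc (0 : ℝ) 1, -ξ ≤ gver r s) :
    ∀ gver' : ℝ → ℝ → ℝ,
      (∀ r s, gver' r s = if s = r then gver r s else -ξ) →
      -- HR1 for the modified mechanism
      (∀ t ∈ Set.Icc (0 : ℝ) 1, ∀ r ∈ Set.Icc (0 : ℝ) 1,
        V r * gver' r t + (1 - V r) * gbot r ≤ V t * gver' t t + (1 - V t) * gbot t) ∧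
      -- HR2 for the modified mechanism
      (∀ t ∈ Set.Icc (0 : ℝ) 1, t ≤ gbot t ∧ t ≤ gver' t t) ∧
      -- HR3 for the modified mechanism
      (∀ r ∈ Set.Icc (0 : ℝ) 1, -ξ ≤ gbot r ∧ ∀ s ∈ Set.Icc (0 : ℝ) 1, -ξ ≤ gver' r s) ∧
      -- same truthful expected grades
      (∀ t ∈ Set.Icc (0 : ℝ) 1,
        V t * gver' t t + (1 - V t) * gbot t = V t * gver t t + (1 - V t) * gbot t) := by
  intro gver' hdef
  obtain rfl : gver' = penalize ξ gver := funext₂ hdef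
  refine ⟨fun t ht r hr => ?_, fun t ht => ?_, fun r hr => ?_, fun t _ => by rw [penalize_self]⟩
  · have hVr : 0 ≤ V r := (hV r hr).1
    calc V r * penalize ξ gver r t + (1 - V r) * gbot r
        ≤ V r * gver r t + (1 - V r) * gbot r := by
          gcongr
          exact penalize_le ((HR3 r hr).2 t ht)
      _ ≤ V t * gver t t + (1 - V t) * gbot t := HR1 t ht r hr
      _ = V t * penalize ξ gver t t + (1 - V t) * gbot t := by rw [penalize_self]
  · simpa using HR2 t ht
  · exact ⟨(HR3 r hr).1, fun s hs => neg_le_penalize ((HR3 r hr).2 s hs)⟩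

/-- Replacing the verified grade of a caught liar by the maximal penalty `-ξ` preserves
validity (HR1, HR2, HR3) and leaves all truthful expected grades unchanged. -/
theorem max_penalty_preserves_validity (ξ : ℝ) (hξ : 0 ≤ ξ)
    (V gbot : ℝ → ℝ) (gver : ℝ → ℝ → ℝ)
    (hV : ∀ r ∈ Set.Icc (0 : ℝ) 1, V r ∈ Set.Icc (0 : ℝ) 1)
    (HR1 : ∀ t ∈ Set.Icc (0 : ℝ) 1, ∀ r ∈ Set.Icc (0 : ℝ) 1,
      V r * gver r t + (1 - V r) * gbot r ≤ V t * gver t t + (1 - V t) * gbot t)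
    (HR2 : ∀ t ∈ Set.Icc (0 : ℝ) 1, t ≤ gbot t ∧ t ≤ gver t t)
    (HR3 : ∀ r ∈ Set.Icc (0 : ℝ) 1, -ξ ≤ gbot r ∧ ∀ s ∈ Set.Icc (0 : ℝ) 1, -ξ ≤ gver r s) :
    ∀ gver' : ℝ → ℝ → ℝ,
      (∀ r s, gver' r s = if s = r then gver r s else -ξ) →
      -- HR1 for the modified mechanism
      (∀ t ∈ Set.Icc (0 : ℝ) 1, ∀ r ∈ Set.Icc (0 : ℝ) 1,
        V r * gver' r t + (1 - V r) * gbot r ≤ V t * gver' t t + (1 - V t) * gbot t) ∧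
      -- HR2 for the modified mechanism
      (∀ t ∈ Set.Icc (0 : ℝ) 1, t ≤ gbot t ∧ t ≤ gver' t t) ∧
      -- HR3 for the modified mechanism
      (∀ r ∈ Set.Icc (0 : ℝ) 1, -ξ ≤ gbot r ∧ ∀ s ∈ Set.Icc (0 : ℝ) 1, -ξ ≤ gver' r s) ∧
      -- same truthful expected grades
      (∀ t ∈ Set.Icc (0 : ℝ) 1,
        V t * gver' t t + (1 - V t) * gbot t = V t * gver t t + (1 - V t) * gbot t) :=
  max_penalty_preserves_validity_general ξ V gbot gver hV HR1 HR2 HR3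
end

section
/- (Limited liability forces near-full verification.) Let ξ = 0 (limited liability) and let (V, g⊥, gver) be a mechanism satisfying HR1, HR2 and HR3 with ξ = 0. If the truthful expected grade of a type-0 agent is 0, i.e., V(0)·gver(0,0) + (1 − V(0))·g⊥(0) = 0, then V(t̂) = 1 for every t̂ ∈ (0,1]. Consequently, for any Borel probability measure p on [0,1] with p({0}) > 0, if the expected bias ∫(ḡ_t(t) − t) dp(t) equals 0, then the expected verification ∫ V(t) dp(t) is at least 1 − p({0}). -/
open MeasureTheory

/-! Under limited liability a type-0 agent who reports `r > 0` is graded at least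
`(1 - V r) * gbot r ≥ (1 - V r) * r`, so a zero truthful grade at 0 forces `V r = 1`.
By HR2 the bias `ḡ_t(t) - t` is a convex combination of nonnegative terms; zero expected
bias therefore makes it vanish at every atom of `p`, in particular at 0, and then
`∫ V dp ≥ p((0,1]) = 1 - p({0})`. -/

lemma le_convex_comb {v a x y : ℝ} (hv : v ∈ Set.Icc (0 : ℝ) 1) (hx : a ≤ x) (hy : a ≤ y) :
    a ≤ v * x + (1 - v) * y := by
  nlinarith [hv.1, hv.2]

lemma eq_one_of_convex_comb_nonpos {v x y : ℝ} (hv : v ∈ Set.Icc (0 : ℝ) 1) (hx : 0 ≤ x)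
    (hy : 0 < y) (h : v * x + (1 - v) * y ≤ 0) : v = 1 := by
  have : (1 - v) * y ≤ 0 := by nlinarith [hv.1]
  nlinarith [hv.2]

lemma eq_zero_of_integral_eq_zero_of_measure_singleton_pos {α : Type*} [MeasurableSpace α]
    {μ : Measure α} {f : α → ℝ} (hf0 : 0 ≤ᵐ[μ] f) (hfi : Integrable f μ)
    (hf : ∫ x, f x ∂μ = 0) {x : α} (hx : 0 < μ {x}) : f x = 0 := by
  have hnull : μ {y | f y ≠ 0} = 0 := (integral_eq_zero_iff_of_nonneg_ae hf0 hfi).mp hf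
  by_contra hfx
  exact hx.ne' (measure_mono_null (Set.singleton_subset_iff.mpr hfx) hnull)

lemma measureReal_le_integral_of_one_le_on {α : Type*} [MeasurableSpace α] {μ : Measure α}
    [IsFiniteMeasure μ] {f : α → ℝ} {s : Set α} (hs : MeasurableSet s) (hfi : Integrable f μ)
    (hf0 : 0 ≤ᵐ[μ] f) (hfs : ∀ x ∈ s, 1 ≤ f x) : μ.real s ≤ ∫ x, f x ∂μ :=
  calc μ.real s = 1 * μ.real s := (one_mul _).symm
    _ ≤ ∫ x in s, f x ∂μ :=
      setIntegral_ge_of_const_le_real hs (measure_ne_top μ s) hfs hfi.integrableOn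
    _ ≤ ∫ x, f x ∂μ := setIntegral_le_integral hfi hf0

lemma measureReal_Icc_eq_add_Ioc {μ : Measure ℝ} [IsFiniteMeasure μ] {a b : ℝ} (hab : a ≤ b) :
    μ.real (Set.Icc a b) = μ.real {a} + μ.real (Set.Ioc a b) := by
  rw [← Set.Ioc_insert_left hab, ← Set.singleton_union,
    measureReal_union (by simp) measurableSet_Ioc]

/-- Limited liability (`ξ = 0`) forces near-full verification: if a valid mechanism
gives a truthful type-0 agent an expected grade of `0`, it must audit every positive
report with probability 1; hence zero expected bias forces expected verification at
least `1 - p({0})` whenever `p({0}) > 0`. -/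
theorem limited_liability_full_verification
    (V gbot : ℝ → ℝ) (gver : ℝ → ℝ → ℝ)
    (hV : ∀ r ∈ Set.Icc (0 : ℝ) 1, V r ∈ Set.Icc (0 : ℝ) 1)
    (gbar : ℝ → ℝ → ℝ)
    (hgbar : ∀ t r, gbar t r = V r * gver r t + (1 - V r) * gbot r)
    (HR1 : ∀ t ∈ Set.Icc (0 : ℝ) 1, ∀ r ∈ Set.Icc (0 : ℝ) 1, gbar t r ≤ gbar t t)
    (HR2 : ∀ t ∈ Set.Icc (0 : ℝ) 1, t ≤ gbot t ∧ t ≤ gver t t)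
    (HR3 : ∀ r ∈ Set.Icc (0 : ℝ) 1, (0 : ℝ) ≤ gbot r ∧ ∀ s ∈ Set.Icc (0 : ℝ) 1, (0 : ℝ) ≤ gver r s) :
    (gbar 0 0 = 0 → ∀ r ∈ Set.Ioc (0 : ℝ) 1, V r = 1) ∧
    (∀ p : Measure ℝ, IsProbabilityMeasure p → p (Set.Icc (0 : ℝ) 1) = 1 →
      0 < p {(0 : ℝ)} →
      Integrable (fun t => gbar t t) p → Integrable V p →
      (∫ t, (gbar t t - t) ∂p) = 0 →
      1 - (p {(0 : ℝ)}).toReal ≤ ∫ t, V t ∂p) := by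
  have h0 : (0 : ℝ) ∈ Set.Icc (0 : ℝ) 1 := Set.left_mem_Icc.mpr zero_le_one
  have full_audit : gbar 0 0 = 0 → ∀ r ∈ Set.Ioc (0 : ℝ) 1, V r = 1 := fun hzero r hr => by
    have hr' : r ∈ Set.Icc (0 : ℝ) 1 := Set.Ioc_subset_Icc_self hr
    refine eq_one_of_convex_comb_nonpos (hV r hr') ((HR3 r hr').2 0 h0)
      (hr.1.trans_le (HR2 r hr').1) ?_
    simpa only [hgbar] using (HR1 0 h0 r hr').trans hzero.le
  refine ⟨full_audit, fun p _ hI hp0 hint hintV hbias => ?_⟩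
  have hIcc : ∀ᵐ t ∂p, t ∈ Set.Icc (0 : ℝ) 1 := by
    rw [ae_mem_iff_measure_eq measurableSet_Icc.nullMeasurableSet, hI, measure_univ]
  have hbias_nonneg : ∀ᵐ t ∂p, 0 ≤ gbar t t - t := hIcc.mono fun t ht => by
    rw [hgbar, sub_nonneg]
    exact le_convex_comb (hV t ht) (HR2 t ht).2 (HR2 t ht).1
  have hid : Integrable (fun t : ℝ => t) p := Integrable.of_mem_Icc 0 1 aemeasurable_id hIcc
  have hzero : gbar 0 0 = 0 := by
    simpa using eq_zero_of_integral_eq_zero_of_measure_singleton_pos hbias_nonneg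
      (hint.sub hid) hbias hp0
  have hsplit := measureReal_Icc_eq_add_Ioc (μ := p) zero_le_one
  rw [measureReal_def, hI, ENNReal.toReal_one] at hsplit
  calc 1 - (p {(0 : ℝ)}).toReal = p.real (Set.Ioc 0 1) := by
        rw [← measureReal_def]; linarith
    _ ≤ ∫ t, V t ∂p := measureReal_le_integral_of_one_le_on measurableSet_Ioc hintV
        (hIcc.mono fun t ht => (hV t ht).1) fun t ht => (full_audit hzero t ht).ge
end

section
/- (AS-MCV bias bound.) Let n ≥ 2, β ∈ [0,1], and let t_1, …, t_n ∈ [0,1]. For each i define the leave-one-out cutoff γ_i := sup{γ ∈ [0,1] : (1/(n−1))·Σ_{j ≠ i} max(γ − t_j, 0) ≤ (n/(n−1))·β}. Then the average bias of the Agent-Specific MCV mechanism satisfies (1/n)·Σ_{i=1}^n (max(t_i, γ_i) − t_i) ≤ β + 1/n. -/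
/-!
The supremum defining `γ_i` is attained (its constraint set is compact and contains `0`), so every
cutoff satisfies its own leave-one-out budget `∑_{j ≠ i} (γ_i - t_j)⁺ ≤ nβ`. Let `k` be an agent
with the largest cutoff. Raising every agent's cutoff to `γ_k` only increases the total bias, and the
total bias at the common cutoff `γ_k` is agent `k`'s own bias, at most `1`, plus agent `k`'s
leave-one-out sum, at most `nβ`. Dividing `nβ + 1` by `n` gives the bound.
-/

open Finset Set

theorem csSup_mem_Icc_sublevel {f : ℝ → ℝ} (hf : Continuous f) {a b c : ℝ} (hab : a ≤ b)
    (ha : f a ≤ c) : sSup {g ∈ Icc a b | f g ≤ c} ∈ {g ∈ Icc a b | f g ≤ c} :=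
  (isCompact_Icc.inter_right (isClosed_le hf continuous_const)).sSup_mem
    ⟨a, ⟨left_mem_Icc.mpr hab, ha⟩⟩

theorem continuous_sum_max_sub_zero {ι : Type*} (s : Finset ι) (t : ι → ℝ) :
    Continuous fun g : ℝ => ∑ j ∈ s, max (g - t j) 0 := by
  fun_prop

theorem sum_max_sub_self_le_of_leave_one_out {ι : Type*} [Fintype ι] [DecidableEq ι] [Nonempty ι]
    (t γ : ι → ℝ) {C : ℝ} (hbias : ∀ i, γ i - t i ≤ 1)
    (hloo : ∀ i, ∑ j ∈ univ.erase i, max (γ i - t j) 0 ≤ C) :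
    ∑ i, (max (t i) (γ i) - t i) ≤ C + 1 := by
  obtain ⟨k, -, hk⟩ := exists_max_image univ γ univ_nonempty
  calc ∑ i, (max (t i) (γ i) - t i) = ∑ i, max (γ i - t i) 0 := by
        refine sum_congr rfl fun i _ => ?_
        rw [← max_sub_sub_right, sub_self, max_comm]
    _ ≤ ∑ i, max (γ k - t i) 0 :=
        sum_le_sum fun i _ => max_le_max_right 0 (sub_le_sub_right (hk i (mem_univ i)) _)
    _ = max (γ k - t k) 0 + ∑ j ∈ univ.erase k, max (γ k - t j) 0 :=
        (add_sum_erase univ _ (mem_univ k)).symm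
    _ ≤ C + 1 := by linarith [max_le (hbias k) zero_le_one, hloo k]

/-- AS-MCV bias bound: with leave-one-out cutoffs `γ i`, the average bias of the
Agent-Specific MCV mechanism is at most `β + 1/n`. -/
theorem as_mcv_bias_bound (n : ℕ) (hn : 2 ≤ n) (β : ℝ) (hβ : β ∈ Set.Icc (0 : ℝ) 1)
    (t : Fin n → ℝ) (ht : ∀ i, t i ∈ Set.Icc (0 : ℝ) 1)
    (γ : Fin n → ℝ)
    (hγ : ∀ i, γ i = sSup {g ∈ Set.Icc (0 : ℝ) 1 |
      (1 / ((n : ℝ) - 1)) * ∑ j ∈ Finset.univ.erase i, max (g - t j) 0 ≤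
        ((n : ℝ) / ((n : ℝ) - 1)) * β}) :
    (1 / (n : ℝ)) * ∑ i, (max (t i) (γ i) - t i) ≤ β + 1 / (n : ℝ) := by
  have hn1 : (0 : ℝ) < n - 1 := by
    have : (2 : ℝ) ≤ n := by exact_mod_cast hn
    linarith
  have hcutoff (i : Fin n) : γ i ∈ Set.Icc 0 1 ∧ ∑ j ∈ univ.erase i, max (γ i - t j) 0 ≤ n * β := by
    have hzero : ∑ j ∈ univ.erase i, max (0 - t j) 0 = 0 :=
      sum_eq_zero fun j _ => max_eq_right (by linarith [(ht j).1])
    obtain ⟨hγi, hle⟩ := hγ i ▸ csSup_mem_Icc_sublevel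
      ((continuous_sum_max_sub_zero _ t).const_mul _) zero_le_one
      (by rw [hzero, mul_zero]; exact mul_nonneg (div_pos (by linarith) hn1).le hβ.1)
    rw [one_div_mul_eq_div, div_mul_eq_mul_div, div_le_div_iff_of_pos_right hn1] at hle
    exact ⟨hγi, hle⟩
  have : Nonempty (Fin n) := ⟨⟨0, by omega⟩⟩
  have htotal := sum_max_sub_self_le_of_leave_one_out t γ
    (fun i => by linarith [(hcutoff i).1.2, (ht i).1]) fun i => (hcutoff i).2
  calc (1 / (n : ℝ)) * ∑ i, (max (t i) (γ i) - t i) ≤ (1 / n) * (n * β + 1) := by gcongr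
    _ = β + 1 / n := by field_simp
end

section
/- (AS-MCV verification bound.) Let n ≥ 2, β ∈ [0,1], ξ ≥ 0, and let t_1, …, t_n ∈ [0,1]. For each i define the leave-one-out cutoff γ_i := sup{γ ∈ [0,1] : (1/(n−1))·Σ_{j ≠ i} max(γ − t_j, 0) ≤ (n/(n−1))·β}, and define the full-sample cutoff γ* := sup{γ ∈ [0,1] : (1/n)·Σ_{j=1}^n max(γ − t_j, 0) ≤ β}. Then γ_i ≥ γ* for every i, and consequently the average verification of the Agent-Specific MCV mechanism satisfies (1/n)·Σ_{i=1}^n max(t_i − γ_i, 0)/(t_i + ξ) ≤ (1/n)·Σ_{i=1}^n max(t_i − γ*, 0)/(t_i + ξ) (interpreting each summand as 0 when the numerator is 0). -/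
/-!
Both cutoffs are suprema of sublevel sets in `[0, 1]` of the piecewise-linear excess
`g ↦ ∑ max (g - t j) 0`. Dropping agent `i` only removes a nonnegative term from the excess,
and the rescaled budget `n/(n-1) · β` of the leave-one-out constraint corresponds to the same
total budget `n β`, so the full-sample feasible set is contained in every leave-one-out one and
`γ* ≤ γ i`. The audit probability `max (t - γ) 0 / (t + ξ)` is antitone in the cutoff, which
gives the bound on the average verification.
-/

open Finset

/-- An empty `S` has junk supremum `0`, which the nonnegativity of `T` still dominates. -/
theorem Real.sSup_le_sSup_of_subset_of_nonneg {S T : Set ℝ} (hST : S ⊆ T) (hT : BddAbove T)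
    (hT₀ : ∀ x ∈ T, 0 ≤ x) : sSup S ≤ sSup T := by
  rcases S.eq_empty_or_nonempty with rfl | hS
  · exact Real.sSup_empty ▸ Real.sSup_nonneg hT₀
  · exact csSup_le_csSup hT hS hST

theorem sum_erase_max_sub_le_sum {ι : Type*} [DecidableEq ι] (s : Finset ι) (i : ι)
    (g : ℝ) (t : ι → ℝ) :
    ∑ j ∈ s.erase i, max (g - t j) 0 ≤ ∑ j ∈ s, max (g - t j) 0 :=
  sum_le_sum_of_subset_of_nonneg (erase_subset i s) fun _ _ _ => le_max_right _ _

theorem leaveOneOut_budget_of_full_budget {n : ℕ} (hn : 1 ≤ n) {β S' S : ℝ} (hS : S' ≤ S)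
    (h : 1 / (n : ℝ) * S ≤ β) : 1 / ((n : ℝ) - 1) * S' ≤ (n : ℝ) / ((n : ℝ) - 1) * β := by
  have hn₀ : (0 : ℝ) < n := by exact_mod_cast hn
  have hn₁ : (0 : ℝ) ≤ (n : ℝ) - 1 := sub_nonneg.mpr (by exact_mod_cast hn)
  have hSβ : S' ≤ n * β := hS.trans <| by rwa [one_div_mul_eq_div, div_le_iff₀' hn₀] at h
  calc 1 / ((n : ℝ) - 1) * S' ≤ 1 / ((n : ℝ) - 1) * (n * β) := by gcongr
    _ = (n : ℝ) / ((n : ℝ) - 1) * β := by ring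

theorem fullCutoff_le_leaveOneOutCutoff {n : ℕ} (β : ℝ) (t : Fin n → ℝ) (i : Fin n) :
    sSup {g ∈ Set.Icc (0 : ℝ) 1 | 1 / (n : ℝ) * ∑ j, max (g - t j) 0 ≤ β} ≤
      sSup {g ∈ Set.Icc (0 : ℝ) 1 |
        1 / ((n : ℝ) - 1) * ∑ j ∈ univ.erase i, max (g - t j) 0 ≤ (n : ℝ) / ((n : ℝ) - 1) * β} :=
  Real.sSup_le_sSup_of_subset_of_nonneg
    (fun _ ⟨hg, hβ⟩ => ⟨hg, leaveOneOut_budget_of_full_budget i.pos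
      (sum_erase_max_sub_le_sum _ i _ t) hβ⟩)
    ⟨1, fun _ hg => hg.1.2⟩ fun _ hg => hg.1.1

theorem max_sub_div_antitone_cutoff {ξ a b : ℝ} (hξ : 0 ≤ ξ) (ha : 0 ≤ a) (hab : a ≤ b)
    (x : ℝ) : max (x - b) 0 / (x + ξ) ≤ max (x - a) 0 / (x + ξ) := by
  rcases le_or_gt x a with hxa | hax
  · simp [max_eq_right (sub_nonpos.mpr hxa), max_eq_right (sub_nonpos.mpr (hxa.trans hab))]
  · exact div_le_div_of_nonneg_right (max_le_max (by linarith) le_rfl) (by linarith)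

theorem as_mcv_verification_bound_general (n : ℕ)
    (β : ℝ) (ξ : ℝ) (hξ : 0 ≤ ξ)
    (t : Fin n → ℝ)
    (γ : Fin n → ℝ)
    (hγ : ∀ i, γ i = sSup {g ∈ Set.Icc (0 : ℝ) 1 |
      (1 / ((n : ℝ) - 1)) * ∑ j ∈ Finset.univ.erase i, max (g - t j) 0 ≤
        ((n : ℝ) / ((n : ℝ) - 1)) * β})
    (γstar : ℝ)
    (hγstar : γstar = sSup {g ∈ Set.Icc (0 : ℝ) 1 |
      (1 / (n : ℝ)) * ∑ j, max (g - t j) 0 ≤ β}) :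
    (∀ i, γstar ≤ γ i) ∧
    (1 / (n : ℝ)) * ∑ i, max (t i - γ i) 0 / (t i + ξ) ≤
      (1 / (n : ℝ)) * ∑ i, max (t i - γstar) 0 / (t i + ξ) := by
  have hcutoff : ∀ i, γstar ≤ γ i := fun i =>
    hγstar ▸ hγ i ▸ fullCutoff_le_leaveOneOutCutoff β t i
  have hγstar₀ : 0 ≤ γstar := hγstar ▸ Real.sSup_nonneg fun _ hg => hg.1.1
  refine ⟨hcutoff, mul_le_mul_of_nonneg_left (sum_le_sum fun i _ => ?_) (by positivity)⟩
  exact max_sub_div_antitone_cutoff hξ hγstar₀ (hcutoff i) (t i)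

/-- AS-MCV verification bound: each leave-one-out cutoff `γ i` is at least the
full-sample cutoff `γ*`, hence the average verification of the Agent-Specific MCV
mechanism is at most that of the MCV mechanism with cutoff `γ*`. -/
theorem as_mcv_verification_bound (n : ℕ) (hn : 2 ≤ n)
    (β : ℝ) (hβ : β ∈ Set.Icc (0 : ℝ) 1) (ξ : ℝ) (hξ : 0 ≤ ξ)
    (t : Fin n → ℝ) (ht : ∀ i, t i ∈ Set.Icc (0 : ℝ) 1)
    (γ : Fin n → ℝ)
    (hγ : ∀ i, γ i = sSup {g ∈ Set.Icc (0 : ℝ) 1 |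
      (1 / ((n : ℝ) - 1)) * ∑ j ∈ Finset.univ.erase i, max (g - t j) 0 ≤
        ((n : ℝ) / ((n : ℝ) - 1)) * β})
    (γstar : ℝ)
    (hγstar : γstar = sSup {g ∈ Set.Icc (0 : ℝ) 1 |
      (1 / (n : ℝ)) * ∑ j, max (g - t j) 0 ≤ β}) :
    (∀ i, γstar ≤ γ i) ∧
    (1 / (n : ℝ)) * ∑ i, max (t i - γ i) 0 / (t i + ξ) ≤
      (1 / (n : ℝ)) * ∑ i, max (t i - γstar) 0 / (t i + ξ) :=
  as_mcv_verification_bound_general n β ξ hξ t γ hγ γstar hγstar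
end

section
/- (Expected grade of the Polynomial Verification mechanism.) Let κ ≥ 1 be an integer, θ ∈ (0,1], and t, t̂ ∈ [0,1]. Set c := κ^κ/(κ+1)^(κ+1) and q := θ·t̂^(1/κ). Then q·(c + (1/θ)·(1 + 1/κ)·t − 1/(κ·θ^(κ+1))) + (1 − q)·(c + (1/(κ·θ^(κ+1)))·Σ_{ℓ=1}^{κ} q^ℓ) = c + (1 + 1/κ)·t·t̂^(1/κ) − (1/κ)·t̂^(1+1/κ), i.e., the expected grade of a type-t agent reporting t̂ equals c + R^(1+1/κ)(t̂, t). -/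
/-! The unverified grade is a truncated geometric series in the audit probability `q`, so the
mixture telescopes: `(1 - q) · Σ_{ℓ=1}^{κ} q^ℓ = q - q^(κ+1)`. The term `q` cancels the constant
penalty `-q/(κ θ^(κ+1))` of the verified grade, and what is left,
`-q^(κ+1)/(κ θ^(κ+1)) = -r^(1+1/κ)/κ`, is exactly the concave part of the semi-power
scoring rule. -/

open Finset

theorem sum_Icc_pow_mul_one_sub {R : Type*} [Ring R] (q : R) (n : ℕ) :
    (∑ ℓ ∈ Icc 1 n, q ^ ℓ) * (1 - q) = q - q ^ (n + 1) := by
  rw [← Ico_add_one_right_eq_Icc, geom_sum_Ico_mul_neg q (by omega), pow_one]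

theorem mix_verified_unverified_eq {R : Type*} [CommRing R] (c a b q : R) (n : ℕ) :
    q * (c + a - b) + (1 - q) * (c + b * ∑ ℓ ∈ Icc 1 n, q ^ ℓ) =
      c + q * a - b * q ^ (n + 1) := by
  linear_combination b * sum_Icc_pow_mul_one_sub q n

theorem Real.rpow_one_div_natCast_pow_succ {r : ℝ} (hr : 0 ≤ r) {n : ℕ} (hn : n ≠ 0) :
    (r ^ ((1 : ℝ) / n)) ^ (n + 1) = r ^ (1 + (1 : ℝ) / n) := by
  rw [← Real.rpow_mul_natCast hr]
  congr 1
  push_cast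
  field_simp

theorem pv_expected_grade_general (κ : ℕ) (hκ : 1 ≤ κ) (θ : ℝ) (hθ : θ ∈ Set.Ioc (0 : ℝ) 1)
    (t r : ℝ) (hr : r ∈ Set.Icc (0 : ℝ) 1)
    (c q : ℝ)
    (hq : q = θ * r ^ ((1 : ℝ) / κ)) :
    q * (c + (1 / θ) * (1 + 1 / (κ : ℝ)) * t - 1 / ((κ : ℝ) * θ ^ (κ + 1))) +
      (1 - q) * (c + (1 / ((κ : ℝ) * θ ^ (κ + 1))) * ∑ ℓ ∈ Finset.Icc 1 κ, q ^ ℓ) =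
    c + (1 + 1 / (κ : ℝ)) * t * r ^ ((1 : ℝ) / κ) -
      (1 / (κ : ℝ)) * r ^ (1 + (1 : ℝ) / κ) := by
  have hκ0 : κ ≠ 0 := by omega
  have hθ0 : θ ≠ 0 := hθ.1.ne'
  rw [mix_verified_unverified_eq, hq, mul_pow,
    Real.rpow_one_div_natCast_pow_succ hr.1 hκ0]
  field_simp

/-- Expected grade of the Polynomial Verification mechanism: with audit probability
`q = θ · r^(1/κ)`, verified grade `c + (1/θ)(1 + 1/κ)·t − 1/(κ·θ^(κ+1))` (in expectation
over the performance, whose mean is `t`), and unverified grade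
`c + (1/(κ·θ^(κ+1))) · Σ_{ℓ=1}^κ q^ℓ`, the expected grade of a type-`t` agent reporting `r`
equals `c + (1 + 1/κ)·t·r^(1/κ) − (1/κ)·r^(1+1/κ) = c + R^(1+1/κ)(r, t)`. -/
theorem pv_expected_grade (κ : ℕ) (hκ : 1 ≤ κ) (θ : ℝ) (hθ : θ ∈ Set.Ioc (0 : ℝ) 1)
    (t r : ℝ) (ht : t ∈ Set.Icc (0 : ℝ) 1) (hr : r ∈ Set.Icc (0 : ℝ) 1)
    (c q : ℝ) (hc : c = (κ : ℝ) ^ κ / ((κ : ℝ) + 1) ^ (κ + 1))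
    (hq : q = θ * r ^ ((1 : ℝ) / κ)) :
    q * (c + (1 / θ) * (1 + 1 / (κ : ℝ)) * t - 1 / ((κ : ℝ) * θ ^ (κ + 1))) +
      (1 - q) * (c + (1 / ((κ : ℝ) * θ ^ (κ + 1))) * ∑ ℓ ∈ Finset.Icc 1 κ, q ^ ℓ) =
    c + (1 + 1 / (κ : ℝ)) * t * r ^ ((1 : ℝ) / κ) -
      (1 / (κ : ℝ)) * r ^ (1 + (1 : ℝ) / κ) :=
  pv_expected_grade_general κ hκ θ hθ t r hr c q hq
end

section
/- (PV satisfies truthfulness and nonnegative bias.) Let κ ≥ 1 be an integer, t ∈ [0,1], and c_κ := κ^κ/(κ+1)^(κ+1). Then the function φ(t̂) := c_κ + (1 + 1/κ)·t·t̂^(1/κ) − (1/κ)·t̂^(1+1/κ) on [0,1] attains its maximum exactly at t̂ = t, and the truthful value satisfies φ(t) = c_κ + t^(1+1/κ) ≥ t. Hence the bias φ(t) − t of a truthful type-t agent lies in [0, 1/κ]. -/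
/-!
With `α = 1 + 1/κ`, `φ` is `c_κ` plus the semi-power scoring rule `R^α(r, t)`, and
`t^α - R^α(r, t)` is `α` times the gap in the weighted AM–GM inequality for `t^α` and `r^α`
with weights `1/α` and `1 - 1/α`. Hence the truthful report is the unique maximiser, with value
`c_κ + t^α`. The report `(κ/(κ+1))^κ` earns exactly `t` whatever the type `t`, so the truthful
grade is at least `t`; the bias is at most `1/κ` because `c_κ ≤ 1/κ` and `t^α ≤ t`.
-/

/-- Expected grade in the PV mechanism of a type-`t` agent reporting `r`:
`φ(r) = c_κ + (1 + 1/κ)·t·r^(1/κ) − (1/κ)·r^(1+1/κ)`. -/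
noncomputable def pvPhi (κ : ℕ) (t r : ℝ) : ℝ :=
  (κ : ℝ) ^ κ / ((κ : ℝ) + 1) ^ (κ + 1) +
    (1 + 1 / (κ : ℝ)) * t * r ^ ((1 : ℝ) / κ) - (1 / (κ : ℝ)) * r ^ (1 + (1 : ℝ) / κ)

noncomputable def semiPowerScore (α x s : ℝ) : ℝ :=
  α * s * x ^ (α - 1) - (α - 1) * x ^ α

section SemiPowerScore

variable {α x s : ℝ}

theorem semiPowerScore_self (hα : α ≠ 0) (hs : 0 ≤ s) : semiPowerScore α s s = s ^ α := by
  have h : s * s ^ (α - 1) = s ^ α := by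
    rw [← Real.rpow_one_add' hs (by simpa using hα)]
    ring_nf
  rw [semiPowerScore, mul_assoc, h]
  ring

theorem rpow_sub_semiPowerScore (hα : α ≠ 0) (hx : 0 ≤ x) (hs : 0 ≤ s) :
    s ^ α - semiPowerScore α x s =
      α * (α⁻¹ * s ^ α + (1 - α⁻¹) * x ^ α - (s ^ α) ^ α⁻¹ * (x ^ α) ^ (1 - α⁻¹)) := by
  rw [Real.rpow_rpow_inv hs hα, ← Real.rpow_mul hx, mul_one_sub, mul_inv_cancel₀ hα,
    semiPowerScore]
  field_simp
  ring

theorem semiPowerScore_le (hα : 1 ≤ α) (hx : 0 ≤ x) (hs : 0 ≤ s) :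
    semiPowerScore α x s ≤ s ^ α := by
  have hα₀ : 0 < α := by linarith
  have amgm := Real.geom_mean_le_arith_mean2_weighted (inv_nonneg.2 hα₀.le)
    (sub_nonneg.2 (inv_le_one_of_one_le₀ hα)) (Real.rpow_nonneg hs α) (Real.rpow_nonneg hx α)
    (add_sub_cancel α⁻¹ 1)
  refine sub_nonneg.1 ?_
  rw [rpow_sub_semiPowerScore hα₀.ne' hx hs]
  exact mul_nonneg hα₀.le (sub_nonneg.2 amgm)

theorem semiPowerScore_lt (hα : 1 < α) (hx : 0 ≤ x) (hs : 0 ≤ s) (hxs : x ≠ s) :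
    semiPowerScore α x s < s ^ α := by
  have hα₀ : 0 < α := by linarith
  have amgm := (Real.geom_mean_lt_arith_mean2_weighted_iff_of_pos (inv_pos.2 hα₀)
    (sub_pos.2 (inv_lt_one_of_one_lt₀ hα)) (Real.rpow_nonneg hs α) (Real.rpow_nonneg hx α)
    (add_sub_cancel α⁻¹ 1)).2 fun h => hxs ((Real.rpow_left_inj hs hx hα₀.ne').1 h).symm
  refine sub_pos.1 ?_
  rw [rpow_sub_semiPowerScore hα₀.ne' hx hs]
  exact mul_pos hα₀ (sub_pos.2 amgm)

end SemiPowerScore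

theorem pvPhi_eq_add_semiPowerScore (κ : ℕ) (t r : ℝ) :
    pvPhi κ t r = (κ : ℝ) ^ κ / ((κ : ℝ) + 1) ^ (κ + 1) + semiPowerScore (1 + 1 / κ) r t := by
  simp only [pvPhi, semiPowerScore, add_sub_cancel_left]
  ring

theorem pvPhi_pow_div_succ {κ : ℕ} (hκ : 0 < κ) (t : ℝ) :
    pvPhi κ t (((κ : ℝ) / (κ + 1)) ^ κ) = t := by
  have hq : (0 : ℝ) ≤ κ / (κ + 1) := by positivity
  have root : (((κ : ℝ) / (κ + 1)) ^ κ) ^ ((1 : ℝ) / κ) = κ / (κ + 1) := by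
    rw [one_div, Real.pow_rpow_inv_natCast hq hκ.ne']
  have hpow : (((κ : ℝ) / (κ + 1)) ^ κ) ^ (1 + (1 : ℝ) / κ) = ((κ : ℝ) / (κ + 1)) ^ (κ + 1) := by
    rw [Real.rpow_add' (by positivity) (by positivity), Real.rpow_one, root, pow_succ]
  rw [pvPhi, root, hpow, div_pow, pow_succ]
  field_simp
  ring

theorem pow_div_succ_pow_succ_le_one_div {κ : ℕ} (hκ : 0 < κ) :
    (κ : ℝ) ^ κ / ((κ : ℝ) + 1) ^ (κ + 1) ≤ 1 / κ := by
  have hκ' : (0 : ℝ) < κ := by exact_mod_cast hκ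
  rw [div_le_div_iff₀ (by positivity) hκ', one_mul, ← pow_succ]
  exact pow_le_pow_left₀ hκ'.le (by linarith) _

/-- PV satisfies truthfulness and nonnegative bias: `φ` attains its maximum on `[0,1]`
exactly at the truthful report `r = t`, the truthful value is `c_κ + t^(1+1/κ) ≥ t`,
and the truthful bias lies in `[0, 1/κ]`. -/
theorem pv_truthful_nonneg_bias (κ : ℕ) (hκ : 1 ≤ κ) (t : ℝ) (ht : t ∈ Set.Icc (0 : ℝ) 1) :
    (∀ r ∈ Set.Icc (0 : ℝ) 1, pvPhi κ t r ≤ pvPhi κ t t) ∧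
    (∀ r ∈ Set.Icc (0 : ℝ) 1, r ≠ t → pvPhi κ t r < pvPhi κ t t) ∧
    pvPhi κ t t = (κ : ℝ) ^ κ / ((κ : ℝ) + 1) ^ (κ + 1) + t ^ (1 + (1 : ℝ) / κ) ∧
    t ≤ pvPhi κ t t ∧
    (0 ≤ pvPhi κ t t - t ∧ pvPhi κ t t - t ≤ 1 / (κ : ℝ)) := by
  have hα : 1 < 1 + 1 / (κ : ℝ) := lt_add_of_pos_right 1 (by positivity)
  have truthful : pvPhi κ t t = (κ : ℝ) ^ κ / ((κ : ℝ) + 1) ^ (κ + 1) + t ^ (1 + (1 : ℝ) / κ) := by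
    rw [pvPhi_eq_add_semiPowerScore, semiPowerScore_self (by positivity) ht.1]
  have optimal : ∀ r ∈ Set.Icc (0 : ℝ) 1, pvPhi κ t r ≤ pvPhi κ t t := fun r hr => by
    rw [truthful, pvPhi_eq_add_semiPowerScore]
    gcongr
    exact semiPowerScore_le hα.le hr.1 ht.1
  have nonneg_bias : t ≤ pvPhi κ t t := by
    have hr₀ : ((κ : ℝ) / (κ + 1)) ^ κ ∈ Set.Icc (0 : ℝ) 1 :=
      ⟨by positivity, pow_le_one₀ (by positivity) (div_le_one_of_le₀ (by linarith) (by positivity))⟩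
    simpa only [pvPhi_pow_div_succ hκ] using optimal _ hr₀
  refine ⟨optimal, fun r hr hrt => ?_, truthful, nonneg_bias, sub_nonneg.2 nonneg_bias, ?_⟩
  · rw [truthful, pvPhi_eq_add_semiPowerScore]
    gcongr
    exact semiPowerScore_lt hα hr.1 ht.1 hrt
  · have hpow : t ^ (1 + (1 : ℝ) / κ) ≤ t := Real.rpow_le_self_of_le_one ht.1 ht.2 hα.le
    linarith [pow_div_succ_pow_succ_le_one_div hκ]
end

section
/- (Histogram pigeonhole.) Let T be a nonempty finite set of reals, n a positive integer, and t, t̂ : {1, …, n} → T with t̂_i ≥ t_i for all i and t̂_j > t_j for some j. Then the set S := {s ∈ T : |{i : t̂_i = s}| > |{i : t_i = s}|} is nonempty, and for t_V := max S there exists an agent i with t̂_i = t_V and t_i < t̂_i. That is, in any profile in which all lies are upward and at least one agent lies, some lying agent reports the maximal type whose reported count exceeds its true count (and is thus verified with certainty by the Histogram mechanism). -/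
open Finset

/-!
Upward lies strictly increase the sum of the types, so the reported histogram differs from the
true one. Both histograms have total mass `n`, so the reported count must exceed the true count at
some type, and the set `S` is nonempty. At any type `s ∈ S`, in particular at `max S`, more agents
report `s` than truly have type `s`, so some agent reporting `s` has a different true type; since
lies only go up, that agent lies.
-/

section Fibers

variable {ι M : Type*} [Fintype ι] [DecidableEq M] {T : Finset M}

lemma sum_eq_sum_card_fiber_nsmul [AddCommMonoid M] {f : ι → M} (hf : ∀ i, f i ∈ T) :
    ∑ i, f i = ∑ s ∈ T, #{i | f i = s} • s := by
  rw [← sum_fiberwise_of_maps_to' (fun i _ => hf i) (fun s => s)]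
  simp only [sum_const]

lemma exists_card_fiber_lt_of_sum_ne [AddCommMonoid M] {f g : ι → M} (hf : ∀ i, f i ∈ T)
    (hg : ∀ i, g i ∈ T) (hsum : ∑ i, f i ≠ ∑ i, g i) :
    ∃ s ∈ T, #{i | f i = s} < #{i | g i = s} := by
  by_contra! hle
  have htotal : ∑ s ∈ T, #{i | g i = s} = ∑ s ∈ T, #{i | f i = s} := by
    rw [← card_eq_sum_card_fiberwise (fun i _ => hf i),
      ← card_eq_sum_card_fiberwise (fun i _ => hg i)]
  have hcount : ∀ s ∈ T, #{i | g i = s} = #{i | f i = s} :=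
    (sum_eq_sum_iff_of_le hle).mp htotal
  apply hsum
  rw [sum_eq_sum_card_fiber_nsmul hf, sum_eq_sum_card_fiber_nsmul hg]
  exact sum_congr rfl fun s hs => by rw [hcount s hs]

end Fibers

lemma exists_eq_and_ne_of_card_fiber_lt {ι α : Type*} [Fintype ι] {f g : ι → α} {s : α}
    [DecidablePred (f · = s)] [DecidablePred (g · = s)]
    (hlt : #{i | f i = s} < #{i | g i = s}) : ∃ i, g i = s ∧ f i ≠ s := by
  by_contra! h
  exact (card_le_card fun i => by simpa using h i).not_gt hlt

theorem histogram_pigeonhole_general (T : Finset ℝ) (n : ℕ)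
    (t thad : Fin n → ℝ)
    (htT : ∀ i, t i ∈ T) (hthadT : ∀ i, thad i ∈ T)
    (hup : ∀ i, t i ≤ thad i) (hlie : ∃ j, t j < thad j) :
    ∃ hS : (T.filter (fun s =>
        (Finset.univ.filter (fun i => thad i = s)).card >
          (Finset.univ.filter (fun i => t i = s)).card)).Nonempty,
      ∃ i : Fin n,
        thad i = (T.filter (fun s =>
          (Finset.univ.filter (fun i => thad i = s)).card >
            (Finset.univ.filter (fun i => t i = s)).card)).max' hS ∧
        t i < thad i := by
  have hsum_lt : ∑ i, t i < ∑ i, thad i :=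
    sum_lt_sum (fun i _ => hup i) (hlie.imp fun j hj => ⟨mem_univ j, hj⟩)
  obtain ⟨s, hsT, hs⟩ := exists_card_fiber_lt_of_sum_ne htT hthadT hsum_lt.ne
  have hS : (T.filter fun s => #{i | thad i = s} > #{i | t i = s}).Nonempty :=
    ⟨s, mem_filter.mpr ⟨hsT, hs⟩⟩
  obtain ⟨i, hi, hne⟩ := exists_eq_and_ne_of_card_fiber_lt (mem_filter.mp (max'_mem _ hS)).2
  exact ⟨hS, i, hi, (hup i).lt_of_ne fun h => hne (h.trans hi)⟩

/-- Histogram pigeonhole: if all lies are upward (`t̂ i ≥ t i`) and someone lies, then the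
set `S` of types whose reported count exceeds their true count is nonempty, and some agent
reporting the maximal element of `S` is a liar (hence verified with certainty by the
Histogram mechanism). -/
theorem histogram_pigeonhole (T : Finset ℝ) (hT : T.Nonempty) (n : ℕ) (hn : 0 < n)
    (t thad : Fin n → ℝ)
    (htT : ∀ i, t i ∈ T) (hthadT : ∀ i, thad i ∈ T)
    (hup : ∀ i, t i ≤ thad i) (hlie : ∃ j, t j < thad j) :
    ∃ hS : (T.filter (fun s =>
        (Finset.univ.filter (fun i => thad i = s)).card >
          (Finset.univ.filter (fun i => t i = s)).card)).Nonempty,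
      ∃ i : Fin n,
        thad i = (T.filter (fun s =>
          (Finset.univ.filter (fun i => thad i = s)).card >
            (Finset.univ.filter (fun i => t i = s)).card)).max' hS ∧
        t i < thad i :=
  histogram_pigeonhole_general T n t thad htT hthadT hup hlie
end
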